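/- Let dists₁ and dists₂ be finite sequences of real numbers sorted in ascending order, of lengths n₁ and n₂. The Dynamic Activation procedure, which maintains for each activated row i a pointer into dists₂ and at each step retrieves the pair (i, j) minimizing dists₁[i] + dists₂[j] among currently activated candidates (activating row i+1 with pointer 0 whenever row i is retrieved at pointer 0, and then advancing row i's pointer), enumerates pairs (i, j) in nondecreasing order of dists₁[i] + dists₂[j]. -/
import Mathlib


/-- Correctness of the Dynamic Activation algorithm: given sorted sequences
`dists₁ : Fin n₁ → ℝ` and `dists₂ : Fin n₂ → ℝ`, any output sequence
`out : Fin M → Fin n₁ × Fin n₂` of distinct pairs satisfying the algorithm's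
invariants — (row invariant) all pairs of a row with smaller pointer are output
before a pair of that row; (activation invariant) every row below the current row
has been retrieved at pointer `0`; (greedy invariant) the retrieved pair minimizes
`dists₁[i] + dists₂[j]` among the currently activated candidates — enumerates pairs
in nondecreasing order of `dists₁[i] + dists₂[j]`. -/
theorem stmt_15 (n₁ n₂ M : ℕ) (hq : 0 < n₂)
    (dists₁ : Fin n₁ → ℝ) (dists₂ : Fin n₂ → ℝ)
    (h₁ : Monotone dists₁) (h₂ : Monotone dists₂)
    (out : Fin M → Fin n₁ × Fin n₂)
    (hinj : Function.Injective out)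
    (hrow : ∀ (m : Fin M) (j' : Fin n₂), j' < (out m).2 →
      ∃ m' : Fin M, m' < m ∧ out m' = ((out m).1, j'))
    (hact : ∀ (m : Fin M) (i' : Fin n₁), i' < (out m).1 →
      ∃ m' : Fin M, m' < m ∧ out m' = (i', (⟨0, hq⟩ : Fin n₂)))
    (hmin : ∀ (m : Fin M) (c : Fin n₁ × Fin n₂),
      (∀ m' : Fin M, m' < m → out m' ≠ c) →
      (∀ i' : Fin n₁, i' < c.1 →
        ∃ m' : Fin M, m' < m ∧ out m' = (i', (⟨0, hq⟩ : Fin n₂))) →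
      (∀ j' : Fin n₂, j' < c.2 →
        ∃ m' : Fin M, m' < m ∧ out m' = (c.1, j')) →
      dists₁ (out m).1 + dists₂ (out m).2 ≤ dists₁ c.1 + dists₂ c.2) :
    ∀ m₁ m₂ : Fin M, m₁ ≤ m₂ →
      dists₁ (out m₁).1 + dists₂ (out m₁).2 ≤
        dists₁ (out m₂).1 + dists₂ (out m₂).2 := by
  have key : ∀ a b : Fin M, (a : ℕ) + 1 = (b : ℕ) →
      dists₁ (out a).1 + dists₂ (out a).2 ≤ dists₁ (out b).1 + dists₂ (out b).2 := by
    intro a b hab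
    have hlt : a < b := by
      rw [Fin.lt_def]; omega
    by_cases hA : ∃ i' : Fin n₁, i' < (out b).1 ∧ out a = (i', (⟨0, hq⟩ : Fin n₂))
    · obtain ⟨i', hi', he⟩ := hA
      have e1 : (out a).1 = i' := by rw [he]
      have e2 : (out a).2 = (⟨0, hq⟩ : Fin n₂) := by rw [he]
      rw [e1, e2]
      have t1 : dists₁ i' ≤ dists₁ (out b).1 := h₁ hi'.le
      have t2 : dists₂ ⟨0, hq⟩ ≤ dists₂ (out b).2 := h₂ (by simp [Fin.le_def])
      linarith
    · by_cases hB : ∃ j' : Fin n₂, j' < (out b).2 ∧ out a = ((out b).1, j')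
      · obtain ⟨j', hj', he⟩ := hB
        have e1 : (out a).1 = (out b).1 := by rw [he]
        have e2 : (out a).2 = j' := by rw [he]
        rw [e1, e2]
        have t2 : dists₂ j' ≤ dists₂ (out b).2 := h₂ hj'.le
        linarith
      · refine hmin a (out b) ?_ ?_ ?_
        · intro m' hm' hne
          exact absurd (hinj hne) (by rw [Fin.lt_def] at hm'; intro h; omega)
        · intro i' hi'
          obtain ⟨m', hm', he⟩ := hact b i' hi'
          refine ⟨m', ?_, he⟩
          have h' : (m' : ℕ) < (a : ℕ) + 1 := by rw [Fin.lt_def] at hm'; omega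
          rcases lt_or_eq_of_le (Nat.lt_succ_iff.mp h') with h | h
          · exact Fin.lt_def.mpr h
          · exact absurd ⟨i', hi', by rw [← he]; congr 1; exact (Fin.ext h.symm)⟩ hA
        · intro j' hj'
          obtain ⟨m', hm', he⟩ := hrow b j' hj'
          refine ⟨m', ?_, he⟩
          have h' : (m' : ℕ) < (a : ℕ) + 1 := by rw [Fin.lt_def] at hm'; omega
          rcases lt_or_eq_of_le (Nat.lt_succ_iff.mp h') with h | h
          · exact Fin.lt_def.mpr h
          · exact absurd ⟨j', hj', by rw [← he]; congr 1; exact (Fin.ext h.symm)⟩ hB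
  intro m₁ m₂ h
  obtain ⟨k, hk⟩ : ∃ k, (m₂ : ℕ) = (m₁ : ℕ) + k := ⟨(m₂ : ℕ) - (m₁ : ℕ), by
    rw [Fin.le_def] at h; omega⟩
  clear h
  induction k generalizing m₂ with
  | zero => have : m₁ = m₂ := Fin.ext (by omega); rw [this]
  | succ k ih =>
    have hM : (m₁ : ℕ) + k < M := by have := m₂.isLt; omega
    exact le_trans (ih ⟨(m₁ : ℕ) + k, hM⟩ rfl) (key ⟨(m₁ : ℕ) + k, hM⟩ m₂ (by simp; omega))
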